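/- arXiv:2604.27914 — 3 statements merged into one kernel-verified Lean document; each statement's English description precedes it below -/
import Mathlib

section
/- Conformal coverage bound (lower bound): let U₁, …, U_{n+1} be exchangeable real-valued random variables, α ∈ (0,1), and let τ be the ⌈(1−α)(n+1)⌉-th smallest value among U₁, …, U_n. Then ℙ(U_{n+1} ≤ τ) ≥ 1 − α. -/
open MeasureTheory

/-- The `k`-th smallest element (1-indexed) of a finite multiset of reals. -/
noncomputable def kthSmallest (s : Multiset ℝ) (k : ℕ) : ℝ :=
  (s.sort (· ≤ ·)).getD (k - 1) 0

open Finset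
open scoped ENNReal

/-!
Let `strictRank x j` count the coordinates of `x` strictly below `x j`. Whatever the values (ties
included), at least `k` of the `n + 1` coordinates have `strictRank < k`, namely the first `k` after
sorting. By exchangeability the events `{strictRank U j < k}` all have the same probability `p`,
so integrating the count of those that occur gives `k ≤ (n + 1) p`, i.e. `p ≥ 1 - α`. Finally, if
fewer than `k` of `U₁, …, Uₙ` lie strictly below `Uₙ₊₁`, then `Uₙ₊₁` is at most the `k`-th
smallest of them.
-/

lemma le_kthSmallest_of_countP_lt {s : Multiset ℝ} {k : ℕ} (hk : 1 ≤ k)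
    (hks : k ≤ Multiset.card s) {u : ℝ} (h : s.countP (· < u) < k) : u ≤ kthSmallest s k := by
  by_contra! hlt
  set l := s.sort (· ≤ ·)
  have hk' : k - 1 < l.length := by rw [Multiset.length_sort]; omega
  have hkth : kthSmallest s k = l.get ⟨k - 1, hk'⟩ := List.getD_eq_getElem _ _ hk'
  have htake : ∀ a ∈ l.take k, a < u := by
    intro a ha
    obtain ⟨i, hi, rfl⟩ := List.mem_take_iff_getElem.mp ha
    rw [Nat.lt_min] at hi
    have hik : i ≤ k - 1 := by omega
    exact ((s.pairwise_sort (· ≤ ·)).rel_get_of_le (a := ⟨i, hi.2⟩) (b := ⟨k - 1, hk'⟩)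
      hik).trans_lt (hkth ▸ hlt)
  have hcount : k ≤ s.countP (· < u) := calc
    k = (l.take k).length := by simp; omega
    _ = (l.take k).countP (· < u) := (List.countP_eq_length.mpr (by simpa using htake)).symm
    _ ≤ l.countP (· < u) := (List.take_sublist k l).countP_le
    _ = s.countP (· < u) := by rw [← Multiset.coe_countP, Multiset.sort_eq]
  omega

section StrictRank

variable {ι α : Type*} [Fintype ι] [LinearOrder α]

def strictRank (x : ι → α) (j : ι) : ℕ := #{i | x i < x j}

lemma strictRank_comp_perm (x : ι → α) (σ : Equiv.Perm ι) (j : ι) :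
    strictRank (x ∘ σ) j = strictRank x (σ j) :=
  card_equiv σ (by simp)

lemma strictRank_le_of_monotone {m : ℕ} {x : Fin m → α} (hx : Monotone x) (i : Fin m) :
    strictRank x i ≤ i := calc
  strictRank x i ≤ #(Iio i) := card_le_card fun l hl => by
    simp only [mem_filter, mem_Iio] at hl ⊢
    exact lt_of_not_ge fun h => hl.2.not_ge (hx h)
  _ = i := Fin.card_Iio i

lemma le_card_strictRank_lt {m k : ℕ} (x : Fin m → α) (hk : k ≤ m) :
    k ≤ #{j | strictRank x j < k} := by
  set σ := Tuple.sort x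
  have hrank (i : Fin k) : strictRank x (σ (i.castLE hk)) < k := by
    rw [← strictRank_comp_perm]
    exact (strictRank_le_of_monotone (Tuple.monotone_sort x) _).trans_lt i.2
  simpa using card_le_card_of_injOn (s := univ) (fun i : Fin k => σ (i.castLE hk))
    (fun i _ => by simpa using hrank i) (σ.injective.comp (Fin.castLE_injective hk)).injOn

lemma strictRank_last {n : ℕ} (x : Fin (n + 1) → α) :
    strictRank x (Fin.last n) = #{i : Fin n | x i.castSucc < x (Fin.last n)} := by
  refine (card_bij (fun i _ => i.castSucc) (by simp) (by simp) fun j hj => ?_).symm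
  have hj : x j < x (Fin.last n) := (mem_filter.mp hj).2
  obtain ⟨i, rfl⟩ := Fin.exists_castSucc_eq.mpr (ne_of_apply_ne x hj.ne)
  exact ⟨i, by simpa using hj, rfl⟩

end StrictRank

lemma last_le_kthSmallest_of_strictRank_lt {n k : ℕ} (x : Fin (n + 1) → ℝ) (hk : 1 ≤ k)
    (hkn : k ≤ n) (h : strictRank x (Fin.last n) < k) :
    x (Fin.last n) ≤ kthSmallest (univ.val.map fun i : Fin n => x i.castSucc) k := by
  refine le_kthSmallest_of_countP_lt hk (by simpa using hkn) ?_
  rw [Multiset.countP_map]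
  rwa [strictRank_last] at h

section Exchangeable

variable {ι Ω : Type*} [Fintype ι] [MeasurableSpace Ω] {μ : Measure Ω}

lemma measurable_strictRank (j : ι) : Measurable fun x : ι → ℝ => strictRank x j := by
  simp only [strictRank, card_filter]
  exact Finset.measurable_sum _ fun i _ => Measurable.ite
    (measurableSet_lt (measurable_pi_apply i) (measurable_pi_apply j))
    measurable_const measurable_const

lemma measure_strictRank_lt_eq_of_exchangeable [DecidableEq ι] {X : Ω → ι → ℝ}
    (hX : Measurable X) (hexch : ∀ σ : Equiv.Perm ι, μ.map (fun ω i => X ω (σ i)) = μ.map X)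
    (k : ℕ) (j j' : ι) :
    μ {ω | strictRank (X ω) j < k} = μ {ω | strictRank (X ω) j' < k} := by
  have hS : MeasurableSet {x : ι → ℝ | strictRank x j' < k} :=
    measurable_strictRank j' measurableSet_Iio
  have hswap : Measurable fun ω i => X ω (Equiv.swap j j' i) :=
    measurable_pi_lambda _ fun i => (measurable_pi_apply _).comp hX
  calc μ {ω | strictRank (X ω) j < k}
      = μ.map (fun ω i => X ω (Equiv.swap j j' i)) {x | strictRank x j' < k} := by
        rw [Measure.map_apply hswap hS]
        congr! 2 with ω
        simp [← Function.comp_def, strictRank_comp_perm]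
    _ = μ {ω | strictRank (X ω) j' < k} := by rw [hexch, Measure.map_apply hX hS]; rfl

lemma natCast_le_card_mul_measure [IsProbabilityMeasure μ] {A : ι → Set Ω}
    [∀ ω, DecidablePred (ω ∈ A ·)] (hA : ∀ j, MeasurableSet (A j)) (j₀ : ι)
    (heq : ∀ j, μ (A j) = μ (A j₀)) {k : ℕ}
    (hk : ∀ ω, k ≤ #{j | ω ∈ A j}) : (k : ℝ≥0∞) ≤ Fintype.card ι * μ (A j₀) := calc
  (k : ℝ≥0∞) = ∫⁻ _, (k : ℝ≥0∞) ∂μ := by simp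
  _ ≤ ∫⁻ ω, ∑ j, (A j).indicator 1 ω ∂μ := lintegral_mono fun ω => by
    simp only [Set.indicator_apply, Pi.one_apply, ← natCast_card_filter]
    exact_mod_cast hk ω
  _ = ∑ j, μ (A j) := by
    rw [lintegral_finsetSum _ fun j _ => measurable_one.indicator (hA j)]
    simp [lintegral_indicator_one (hA _)]
  _ = Fintype.card ι * μ (A j₀) := by simp [heq]

end Exchangeable

lemma ofReal_le_of_natCeil_mul_le {c : ℝ} {N : ℕ} (hN : N ≠ 0) {p : ℝ≥0∞}
    (h : (⌈c * N⌉₊ : ℝ≥0∞) ≤ N * p) : ENNReal.ofReal c ≤ p := by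
  refine (ENNReal.mul_le_mul_iff_right (by simpa) (ENNReal.natCast_ne_top N)).mp (le_trans ?_ h)
  calc (N : ℝ≥0∞) * ENNReal.ofReal c = ENNReal.ofReal (c * N) := by
        rw [ENNReal.ofReal_mul' N.cast_nonneg, ENNReal.ofReal_natCast, mul_comm]
    _ ≤ ENNReal.ofReal ⌈c * N⌉₊ := ENNReal.ofReal_le_ofReal (Nat.le_ceil _)
    _ = ⌈c * N⌉₊ := ENNReal.ofReal_natCast _

theorem conformal_coverage_lower_bound_general
    {Ω : Type*} [MeasurableSpace Ω] (μ : Measure Ω) [IsProbabilityMeasure μ]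
    (n : ℕ) (U : Fin (n + 1) → Ω → ℝ) (hU : ∀ i, Measurable (U i))
    (hexch : ∀ σ : Equiv.Perm (Fin (n + 1)),
      Measure.map (fun ω i => U (σ i) ω) μ = Measure.map (fun ω i => U i ω) μ)
    (α : ℝ) (hα1 : α < 1)
    (k : ℕ) (hk : k = ⌈(1 - α) * (n + 1)⌉₊) (hkn : k ≤ n)
    (τ : Ω → ℝ)
    (hτ : ∀ ω, τ ω = kthSmallest
      (Multiset.map (fun i : Fin n => U i.castSucc ω) Finset.univ.val) k) :
    ENNReal.ofReal (1 - α) ≤ μ {ω | U (Fin.last n) ω ≤ τ ω} := by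
  have hk1 : 1 ≤ k := hk ▸ Nat.ceil_pos.mpr (mul_pos (sub_pos.mpr hα1) n.cast_add_one_pos)
  set X : Ω → Fin (n + 1) → ℝ := fun ω i => U i ω
  have hX : Measurable X := measurable_pi_lambda _ hU
  have hcount : (k : ℝ≥0∞) ≤ (n + 1) * μ {ω | strictRank (X ω) (Fin.last n) < k} := by
    simpa using natCast_le_card_mul_measure (A := fun j => {ω | strictRank (X ω) j < k})
      (fun j => hX (measurable_strictRank j measurableSet_Iio)) (Fin.last n)
      (measure_strictRank_lt_eq_of_exchangeable hX hexch k · _)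
      fun ω => le_card_strictRank_lt (X ω) hkn.step
  calc ENNReal.ofReal (1 - α) ≤ μ {ω | strictRank (X ω) (Fin.last n) < k} :=
        ofReal_le_of_natCeil_mul_le n.succ_ne_zero (by push_cast; rwa [← hk])
    _ ≤ μ {ω | U (Fin.last n) ω ≤ τ ω} := measure_mono fun ω hω => by
        rw [Set.mem_ofPred, hτ]
        exact last_le_kthSmallest_of_strictRank_lt (X ω) hk1 hkn hω

theorem conformal_coverage_lower_bound
    {Ω : Type*} [MeasurableSpace Ω] (μ : Measure Ω) [IsProbabilityMeasure μ]
    (n : ℕ) (U : Fin (n + 1) → Ω → ℝ) (hU : ∀ i, Measurable (U i))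
    (hexch : ∀ σ : Equiv.Perm (Fin (n + 1)),
      Measure.map (fun ω i => U (σ i) ω) μ = Measure.map (fun ω i => U i ω) μ)
    (α : ℝ) (hα0 : 0 < α) (hα1 : α < 1)
    (k : ℕ) (hk : k = ⌈(1 - α) * (n + 1)⌉₊) (hkn : k ≤ n)
    (τ : Ω → ℝ)
    (hτ : ∀ ω, τ ω = kthSmallest
      (Multiset.map (fun i : Fin n => U i.castSucc ω) Finset.univ.val) k) :
    ENNReal.ofReal (1 - α) ≤ μ {ω | U (Fin.last n) ω ≤ τ ω} :=
  conformal_coverage_lower_bound_general μ n U hU hexch α hα1 k hk hkn τ hτ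
end

section
/- Conformal coverage bound (upper bound): let U₁, …, U_{n+1} be exchangeable real-valued random variables that are almost surely distinct, α ∈ (0,1), and let τ be the ⌈(1−α)(n+1)⌉-th smallest value among U₁, …, U_n. Then ℙ(U_{n+1} ≤ τ) < 1 − α + 1/(n+1). -/
open MeasureTheory

/-!
By exchangeability the rank of `U (n+1)` among all `n + 1` values is equidistributed over the
positions: each position has the same probability of having rank `< k`. Since the values are
almost surely distinct, at most `k` positions have rank `< k`, so this probability is at most
`k / (n + 1)`. On the event `U (n+1) ≤ τ` fewer than `k` of the first `n` values lie strictly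
below `U (n+1)`, i.e. its rank is `< k`, and `⌈(1 - α)(n + 1)⌉ / (n + 1) < 1 - α + 1 / (n + 1)`.
-/

open Finset ENNReal

section Rank

variable {ι α : Type*} [Fintype ι] [LinearOrder α]

def rank (x : ι → α) (j : ι) : ℕ := #{i | x i < x j}

lemma rank_lt_rank {x : ι → α} {a b : ι} (h : x a < x b) : rank x a < rank x b :=
  card_lt_card <| (ssubset_iff_of_subset fun i hi =>
    mem_filter.2 ⟨mem_univ i, (mem_filter.1 hi).2.trans h⟩).2 ⟨a, by simpa using h, by simp⟩

lemma rank_injective {x : ι → α} (hx : Function.Injective x) : Function.Injective (rank x) := by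
  intro a b hab
  by_contra hne
  rcases lt_or_gt_of_ne (hx.ne hne) with h | h
  · exact (rank_lt_rank h).ne hab
  · exact (rank_lt_rank h).ne' hab

lemma card_rank_lt_le {x : ι → α} (hx : Function.Injective x) (k : ℕ) :
    #{j | rank x j < k} ≤ k := by
  simpa using card_le_card_of_injOn (t := range k) (rank x) (fun j hj => by simpa using hj)
    (rank_injective hx).injOn

lemma rank_comp_perm (x : ι → α) (σ : Equiv.Perm ι) (j : ι) : rank (x ∘ σ) j = rank x (σ j) :=
  card_equiv σ fun i => by simp

lemma rank_last_eq_countP {n : ℕ} (x : Fin (n + 1) → α) :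
    rank x (Fin.last n) =
      (Multiset.map (fun i : Fin n => x i.castSucc) univ.val).countP (· < x (Fin.last n)) := by
  rw [rank, card_filter, Fin.sum_univ_castSucc, Multiset.countP_map, ← filter_val, ← card_def,
    card_filter]
  simp

end Rank

lemma List.Pairwise.countP_lt_le_of_le_getElem {α : Type*} [LinearOrder α] {l : List α}
    (hl : l.Pairwise (· ≤ ·)) {i : ℕ} (hi : i < l.length) {t : α} (ht : t ≤ l[i]) :
    l.countP (· < t) ≤ i := by
  have hdrop : (l.drop i).countP (· < t) = 0 := by
    have hsorted : (l[i] :: l.drop (i + 1)).Pairwise (· ≤ ·) :=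
      List.drop_eq_getElem_cons hi ▸ hl.drop
    rw [List.countP_eq_zero, List.drop_eq_getElem_cons hi]
    rintro a (_ | ⟨_, ha⟩)
    · simpa using ht
    · simpa using ht.trans (List.rel_of_pairwise_cons hsorted ha)
  calc l.countP (· < t) = (l.take i).countP (· < t) := by
        rw [← List.take_append_drop i l, List.countP_append, List.take_append_drop, hdrop,
          add_zero]
    _ ≤ (l.take i).length := List.countP_le_length
    _ ≤ i := List.length_take_le _ _

lemma countP_lt_lt_of_le_kthSmallest (s : Multiset ℝ) {k : ℕ} (hk : 1 ≤ k) {t : ℝ}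
    (ht : t ≤ kthSmallest s k) : s.countP (· < t) < k := by
  by_cases hks : k ≤ Multiset.card s
  · have hlen : k - 1 < (s.sort (· ≤ ·)).length := by
      rw [Multiset.length_sort]; omega
    rw [kthSmallest, List.getD_eq_getElem _ _ hlen] at ht
    have := (Multiset.pairwise_sort s (· ≤ ·)).countP_lt_le_of_le_getElem hlen ht
    rw [← Multiset.sort_eq s (· ≤ ·), Multiset.coe_countP]
    omega
  · -- `kthSmallest s k` is the junk value `0` here, but the count is below `card s < k` anyway.
    exact (Multiset.countP_le_card _ _).trans_lt (not_le.1 hks)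

section Exchangeable

variable {Ω ι : Type*} [MeasurableSpace Ω] {μ : Measure Ω}

def Exchangeable {β : Type*} [MeasurableSpace β] (μ : Measure Ω) (U : ι → Ω → β) : Prop :=
  ∀ σ : Equiv.Perm ι, Measure.map (fun ω i => U (σ i) ω) μ = Measure.map (fun ω i => U i ω) μ

lemma Exchangeable.measure_perm_preimage_eq {β : Type*} [MeasurableSpace β] {U : ι → Ω → β}
    (hexch : Exchangeable μ U) (hU : ∀ i, Measurable (U i)) (σ : Equiv.Perm ι)
    {A : Set (ι → β)} (hA : MeasurableSet A) :
    μ ((fun ω i => U (σ i) ω) ⁻¹' A) = μ ((fun ω i => U i ω) ⁻¹' A) := by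
  have hσ : Measurable fun ω i => U (σ i) ω := measurable_pi_lambda _ fun i => hU (σ i)
  rw [← Measure.map_apply hσ hA, ← Measure.map_apply (measurable_pi_lambda _ hU) hA, hexch σ]

variable {U : ι → Ω → ℝ}

lemma measurableSet_rank_lt [Fintype ι] (j : ι) (k : ℕ) :
    MeasurableSet {x : ι → ℝ | rank x j < k} := by
  have : Measurable fun x : ι → ℝ => rank x j := by
    simp_rw [rank, card_filter]
    exact Finset.measurable_sum _ fun i _ => Measurable.ite
      (measurableSet_lt (measurable_pi_apply i) (measurable_pi_apply j)) measurable_const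
      measurable_const
  exact this measurableSet_Iio

lemma measure_rank_lt_eq [Fintype ι] (hexch : Exchangeable μ U)
    (hU : ∀ i, Measurable (U i)) (j j' : ι) (k : ℕ) :
    μ {ω | rank (fun i => U i ω) j < k} = μ {ω | rank (fun i => U i ω) j' < k} := by
  classical
  have hset : (fun ω i => U (Equiv.swap j j' i) ω) ⁻¹' {x | rank x j' < k} =
      {ω | rank (fun i => U i ω) j < k} := by
    ext ω
    change rank ((fun i => U i ω) ∘ Equiv.swap j j') j' < k ↔ _
    rw [rank_comp_perm, Equiv.swap_apply_right]
    rfl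
  rw [← hset, hexch.measure_perm_preimage_eq hU _ (measurableSet_rank_lt j' k)]
  rfl

lemma ae_injective_of_measure_eq_zero [Countable ι]
    (hdistinct : ∀ i j, i ≠ j → μ {ω | U i ω = U j ω} = 0) :
    ∀ᵐ ω ∂μ, Function.Injective fun i => U i ω := by
  have : ∀ᵐ ω ∂μ, ∀ i j, i ≠ j → U i ω ≠ U j ω := by
    refine ae_all_iff.2 fun i => ae_all_iff.2 fun j => ?_
    by_cases hij : i = j
    · simp [hij]
    · exact (measure_eq_zero_iff_ae_notMem.1 (hdistinct i j hij)).mono fun ω hω _ => hω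
  exact this.mono fun ω hω i j hij => by_contra fun hne => hω i j hne hij

open scoped Classical in
lemma sum_measure_le_of_ae_card_le [Fintype ι] {E : ι → Set Ω} (hE : ∀ i, MeasurableSet (E i))
    {k : ℕ} (h : ∀ᵐ ω ∂μ, #{i | ω ∈ E i} ≤ k) : ∑ i, μ (E i) ≤ k * μ Set.univ := by
  calc ∑ i, μ (E i) = ∫⁻ ω, ∑ i, (E i).indicator 1 ω ∂μ := by
        rw [lintegral_finsetSum _ fun i _ => measurable_one.indicator (hE i)]
        simp [lintegral_indicator_one (hE _)]
    _ ≤ ∫⁻ _, (k : ℝ≥0∞) ∂μ := lintegral_mono_ae <| h.mono fun ω hω => by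
        simpa [Set.indicator_apply, sum_boole] using hω
    _ = k * μ Set.univ := lintegral_const _

lemma measure_rank_lt_le_div_card [Fintype ι] [IsProbabilityMeasure μ] (hexch : Exchangeable μ U)
    (hU : ∀ i, Measurable (U i)) (hdistinct : ∀ i j, i ≠ j → μ {ω | U i ω = U j ω} = 0)
    (j : ι) (k : ℕ) :
    μ {ω | rank (fun i => U i ω) j < k} ≤ k / Fintype.card ι := by
  classical
  have : Nonempty ι := ⟨j⟩
  have hsum : ∑ j', μ {ω | rank (fun i => U i ω) j' < k} ≤ k := by
    simpa using sum_measure_le_of_ae_card_le (E := fun j' => {ω | rank (fun i => U i ω) j' < k})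
      (fun j' => measurable_pi_lambda _ hU (measurableSet_rank_lt j' k))
      ((ae_injective_of_measure_eq_zero hdistinct).mono fun ω hω => by
        convert card_rank_lt_le hω k
        exact Iff.rfl)
  rw [sum_congr rfl fun j' _ => measure_rank_lt_eq hexch hU j' j k, sum_const, card_univ,
    nsmul_eq_mul, mul_comm] at hsum
  rwa [ENNReal.le_div_iff_mul_le (.inl (by simp)) (.inl (by simp))]

end Exchangeable

lemma Nat.ceil_mul_div_lt {K : Type*} [Field K] [LinearOrder K] [IsStrictOrderedRing K]
    [FloorSemiring K] {a c : K} (ha : 0 ≤ a) (hc : 0 < c) : ⌈a * c⌉₊ / c < a + 1 / c := by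
  rw [div_lt_iff₀ hc, add_mul, one_div_mul_cancel hc.ne']
  exact Nat.ceil_lt_add_one (by positivity)

theorem conformal_coverage_upper_bound_general
    {Ω : Type*} [MeasurableSpace Ω] (μ : Measure Ω) [IsProbabilityMeasure μ]
    (n : ℕ) (U : Fin (n + 1) → Ω → ℝ) (hU : ∀ i, Measurable (U i))
    (hexch : ∀ σ : Equiv.Perm (Fin (n + 1)),
      Measure.map (fun ω i => U (σ i) ω) μ = Measure.map (fun ω i => U i ω) μ)
    (hdistinct : ∀ i j : Fin (n + 1), i ≠ j → μ {ω | U i ω = U j ω} = 0)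
    (α : ℝ) (hα1 : α < 1)
    (k : ℕ) (hk : k = ⌈(1 - α) * (n + 1)⌉₊)
    (τ : Ω → ℝ)
    (hτ : ∀ ω, τ ω = kthSmallest
      (Multiset.map (fun i : Fin n => U i.castSucc ω) Finset.univ.val) k) :
    μ {ω | U (Fin.last n) ω ≤ τ ω} < ENNReal.ofReal (1 - α + 1 / (n + 1)) := by
  have hpos : (0 : ℝ) < 1 - α := by linarith
  have hk1 : 1 ≤ k := hk ▸ Nat.ceil_pos.2 (by positivity)
  have hcover : {ω | U (Fin.last n) ω ≤ τ ω} ⊆ {ω | rank (fun i => U i ω) (Fin.last n) < k} :=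
    fun ω hω => by
      change rank _ _ < k
      rw [rank_last_eq_countP]
      exact countP_lt_lt_of_le_kthSmallest _ hk1 (hτ ω ▸ hω)
  calc μ {ω | U (Fin.last n) ω ≤ τ ω} ≤ k / (n + 1) := by
        simpa using (measure_mono hcover).trans (measure_rank_lt_le_div_card hexch hU hdistinct _ k)
    _ = ENNReal.ofReal (k / (n + 1)) := by
        rw [ENNReal.ofReal_div_of_pos (by positivity)]
        norm_cast
    _ < ENNReal.ofReal (1 - α + 1 / (n + 1)) :=
        (ENNReal.ofReal_lt_ofReal_iff_of_nonneg (by positivity)).2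
          (hk ▸ Nat.ceil_mul_div_lt hpos.le (by positivity))

theorem conformal_coverage_upper_bound
    {Ω : Type*} [MeasurableSpace Ω] (μ : Measure Ω) [IsProbabilityMeasure μ]
    (n : ℕ) (U : Fin (n + 1) → Ω → ℝ) (hU : ∀ i, Measurable (U i))
    (hexch : ∀ σ : Equiv.Perm (Fin (n + 1)),
      Measure.map (fun ω i => U (σ i) ω) μ = Measure.map (fun ω i => U i ω) μ)
    (hdistinct : ∀ i j : Fin (n + 1), i ≠ j → μ {ω | U i ω = U j ω} = 0)
    (α : ℝ) (hα0 : 0 < α) (hα1 : α < 1)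
    (k : ℕ) (hk : k = ⌈(1 - α) * (n + 1)⌉₊) (hkn : k ≤ n)
    (τ : Ω → ℝ)
    (hτ : ∀ ω, τ ω = kthSmallest
      (Multiset.map (fun i : Fin n => U i.castSucc ω) Finset.univ.val) k) :
    μ {ω | U (Fin.last n) ω ≤ τ ω} < ENNReal.ofReal (1 - α + 1 / (n + 1)) :=
  conformal_coverage_upper_bound_general μ n U hU hexch hdistinct α hα1 k hk τ hτ
end

section
/- Conditional exchangeability on a symmetric event: let (U₁,J₁), …, (U_{n+1},J_{n+1}) be exchangeable pairs with J_i ∈ {0,1}. Then conditional on the event {J_{n+1} = 1} ∩ {Σ_{i=1}^{n+1} J_i = c+1}, the value U_{n+1} is exchangeable with the multiset {U_i : J_i = 1, i ≤ n}; in particular, if additionally the U_i are a.s. distinct, the conditional probability that U_{n+1} is among the ⌈(1−β)(c+1)⌉ smallest of the c+1 values {U_i : J_i = 1} is at least 1 − β. -/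
open Finset

lemma card_filter_perm {m : ℕ} (σ : Equiv.Perm (Fin m)) (p : Fin m → Prop) [DecidablePred p] :
    (Finset.univ.filter fun i => p (σ i)).card = (Finset.univ.filter p).card := by
  apply Finset.card_bij' (fun i _ => σ i) (fun j _ => σ.symm j) <;> simp

lemma rank_count {α : Type*} [DecidableEq α] (s : Finset α) (f : α → ℝ)
    (hf : Set.InjOn f s) (k : ℕ) (hk1 : 1 ≤ k) (hk : k ≤ s.card) :
    (s.filter (fun j => (s.filter (fun i => f i ≤ f j)).card ≤ k)).card = k := by
  set r : α → ℕ := fun j => (s.filter (fun i => f i ≤ f j)).card with hr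
  have hmem : ∀ j ∈ s, r j ∈ Finset.Icc 1 s.card := by
    intro j hj
    refine Finset.mem_Icc.2 ⟨?_, Finset.card_le_card (Finset.filter_subset _ _)⟩
    refine Finset.card_pos.2 ⟨j, Finset.mem_filter.2 ⟨hj, le_refl _⟩⟩
  have hinj : Set.InjOn r s := by
    intro j1 h1 j2 h2 h12
    by_contra hne
    have hfne : f j1 ≠ f j2 := fun h => hne (hf h1 h2 h)
    wlog hlt : f j1 < f j2 generalizing j1 j2
    · exact this h2 h1 h12.symm (Ne.symm hne) hfne.symm (hfne.lt_or_gt.resolve_left hlt)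
    have hsub : s.filter (fun i => f i ≤ f j1) ⊆ s.filter (fun i => f i ≤ f j2) :=
      fun i hi => Finset.mem_filter.2 ⟨(Finset.mem_filter.1 hi).1,
        le_trans (Finset.mem_filter.1 hi).2 hlt.le⟩
    have hss : s.filter (fun i => f i ≤ f j1) ⊂ s.filter (fun i => f i ≤ f j2) :=
      (Finset.ssubset_iff_of_subset hsub).2
        ⟨j2, Finset.mem_filter.2 ⟨h2, le_refl _⟩, by simp [hlt.not_ge]⟩
    exact absurd h12 (Finset.card_lt_card hss).ne
  have himg : s.image r = Finset.Icc 1 s.card := by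
    apply Finset.eq_of_subset_of_card_le
    · intro x hx
      rcases Finset.mem_image.1 hx with ⟨j, hj, rfl⟩
      exact hmem j hj
    · rw [Finset.card_image_of_injOn hinj, Nat.card_Icc]
      omega
  have key : (s.filter (fun j => r j ≤ k)).image r = Finset.Icc 1 k := by
    have : (s.filter (fun j => r j ≤ k)).image r = (s.image r).filter (· ≤ k) := by
      rw [Finset.filter_image]
    rw [this, himg]
    ext x
    simp only [Finset.mem_filter, Finset.mem_Icc]
    omega
  have := congrArg Finset.card key
  rwa [Finset.card_image_of_injOn (hinj.mono (by exact fun x hx => (Finset.mem_filter.1 hx).1)),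
    Nat.card_Icc, Nat.add_sub_cancel] at this

open MeasureTheory ProbabilityTheory

theorem conditional_exchangeability_on_symmetric_event
    {Ω : Type*} [MeasurableSpace Ω] (μ : Measure Ω) [IsProbabilityMeasure μ]
    (n : ℕ) (U : Fin (n + 1) → Ω → ℝ) (J : Fin (n + 1) → Ω → Bool)
    (hU : ∀ i, Measurable (U i)) (hJ : ∀ i, Measurable (J i))
    (hexch : ∀ σ : Equiv.Perm (Fin (n + 1)),
      Measure.map (fun ω i => (U (σ i) ω, J (σ i) ω)) μ
        = Measure.map (fun ω i => (U i ω, J i ω)) μ)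
    (hdistinct : ∀ i j : Fin (n + 1), i ≠ j → μ {ω | U i ω = U j ω} = 0)
    (c : ℕ) (hc : 1 ≤ c)
    (β : ℝ) (hβ0 : 0 < β) (hβ1 : β < 1)
    (hk : ⌈(1 - β) * (c + 1)⌉₊ ≤ c + 1)
    (A : Set Ω)
    (hA : A = {ω | J (Fin.last n) ω = true ∧
      (Finset.univ.filter (fun i : Fin (n + 1) => J i ω = true)).card = c + 1})
    (hApos : 0 < μ A) :
    ENNReal.ofReal (1 - β) ≤
      μ[{ω | (Finset.univ.filter (fun i : Fin (n + 1) =>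
          J i ω = true ∧ U i ω ≤ U (Fin.last n) ω)).card
            ≤ ⌈(1 - β) * (c + 1)⌉₊} | A] := by
  classical
  set k : ℕ := ⌈(1 - β) * (c + 1)⌉₊ with hkdef
  have hk1 : 1 ≤ k := by
    have : (0:ℝ) < (1 - β) * (c + 1) := by
      apply mul_pos (by linarith)
      positivity
    exact Nat.one_le_iff_ne_zero.2 (by
      simp only [hkdef]
      exact fun h => absurd (Nat.ceil_eq_zero.1 h) (not_le.2 this))
  -- the joint random vector
  set V : Ω → (Fin (n + 1) → ℝ × Bool) := fun ω i => (U i ω, J i ω) with hVdef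
  have hVmeas : Measurable V :=
    measurable_pi_lambda _ (fun i => (hU i).prodMk (hJ i))
  -- symmetric test sets
  set T : Fin (n + 1) → Set (Fin (n + 1) → ℝ × Bool) := fun j =>
    {v | (v j).2 = true ∧
      (Finset.univ.filter (fun i => (v i).2 = true)).card = c + 1 ∧
      (Finset.univ.filter (fun i => (v i).2 = true ∧ (v i).1 ≤ (v j).1)).card ≤ k}
      with hTdef
  have hsnd : ∀ i : Fin (n + 1), MeasurableSet {v : Fin (n + 1) → ℝ × Bool | (v i).2 = true} :=
    fun i => ((measurable_pi_apply i).snd) (measurableSet_singleton true)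
  have hTmeas : ∀ j, MeasurableSet (T j) := by
    intro j
    refine (hsnd j).inter (MeasurableSet.inter ?_ ?_)
    · have hmc : Measurable (fun v : Fin (n + 1) → ℝ × Bool =>
          (Finset.univ.filter (fun i => (v i).2 = true)).card) := by
        simp only [Finset.card_filter]
        exact Finset.measurable_sum _ (fun i _ =>
          Measurable.ite (hsnd i) measurable_const measurable_const)
      exact hmc (measurableSet_singleton (c + 1))
    · have hmc : Measurable (fun v : Fin (n + 1) → ℝ × Bool =>
          (Finset.univ.filter (fun i => (v i).2 = true ∧ (v i).1 ≤ (v j).1)).card) := by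
        simp only [Finset.card_filter]
        refine Finset.measurable_sum _ (fun i _ => Measurable.ite ?_ measurable_const
          measurable_const)
        have h1 : Measurable fun v : Fin (n + 1) → ℝ × Bool => (v i).1 :=
          (measurable_pi_apply i).fst
        have h2 : Measurable fun v : Fin (n + 1) → ℝ × Bool => (v j).1 :=
          (measurable_pi_apply j).fst
        exact (hsnd i).inter (measurableSet_le h1 h2)
      exact hmc measurableSet_Iic
  -- events
  set E : Fin (n + 1) → Set Ω := fun j => V ⁻¹' (T j) with hEdef
  have hEmeas : ∀ j, MeasurableSet (E j) := fun j => hVmeas (hTmeas j)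
  set B : Fin (n + 1) → Set Ω := fun j => {ω | J j ω = true ∧
      (Finset.univ.filter (fun i : Fin (n + 1) => J i ω = true)).card = c + 1} with hBdef
  set C : Set Ω := {ω |
      (Finset.univ.filter (fun i : Fin (n + 1) => J i ω = true)).card = c + 1} with hCdef
  have hcardmeas : Measurable (fun ω =>
      (Finset.univ.filter (fun i : Fin (n + 1) => J i ω = true)).card) := by
    simp only [Finset.card_filter]
    exact Finset.measurable_sum _ (fun i _ =>
      Measurable.ite ((hJ i) (measurableSet_singleton true)) measurable_const measurable_const)
  have hCmeas : MeasurableSet C := hcardmeas (measurableSet_singleton (c + 1))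
  have hBmeas : ∀ j, MeasurableSet (B j) := by
    intro j
    exact (((hJ j) (measurableSet_singleton true)).inter hCmeas)
  -- exchangeability gives equal measures
  have hWmeas : ∀ σ : Equiv.Perm (Fin (n + 1)),
      Measurable (fun ω (i : Fin (n + 1)) => V ω (σ i)) :=
    fun σ => measurable_pi_lambda _ (fun i => (hU (σ i)).prodMk (hJ (σ i)))
  have hperm : ∀ (σ : Equiv.Perm (Fin (n + 1))) (j : Fin (n + 1)),
      μ (E (σ j)) = μ (E j) := by
    intro σ j
    have hset : (fun ω (i : Fin (n + 1)) => V ω (σ i)) ⁻¹' T j = V ⁻¹' T (σ j) := by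
      ext ω
      simp only [hTdef, Set.mem_preimage, Set.mem_setOf_eq]
      rw [card_filter_perm σ (fun i => (V ω i).2 = true),
        card_filter_perm σ (fun i => (V ω i).2 = true ∧ (V ω i).1 ≤ (V ω (σ j)).1)]
    calc μ (E (σ j)) = μ ((fun ω (i : Fin (n + 1)) => V ω (σ i)) ⁻¹' T j) := by
          rw [hEdef]; rw [hset]
      _ = (μ.map (fun ω (i : Fin (n + 1)) => V ω (σ i))) (T j) := by
          rw [Measure.map_apply (hWmeas σ) (hTmeas j)]
      _ = (μ.map V) (T j) := by rw [hexch σ]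
      _ = μ (E j) := by rw [Measure.map_apply hVmeas (hTmeas j)]
  set TB : Fin (n + 1) → Set (Fin (n + 1) → ℝ × Bool) := fun j =>
    {v | (v j).2 = true ∧
      (Finset.univ.filter (fun i => (v i).2 = true)).card = c + 1} with hTBdef
  have hTBmeas : ∀ j, MeasurableSet (TB j) := by
    intro j
    refine (hsnd j).inter ?_
    have hmc : Measurable (fun v : Fin (n + 1) → ℝ × Bool =>
        (Finset.univ.filter (fun i => (v i).2 = true)).card) := by
      simp only [Finset.card_filter]
      exact Finset.measurable_sum _ (fun i _ =>
        Measurable.ite (hsnd i) measurable_const measurable_const)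
    exact hmc (measurableSet_singleton (c + 1))
  have hBpre : ∀ j, B j = V ⁻¹' TB j := fun j => rfl
  have hpermB : ∀ (σ : Equiv.Perm (Fin (n + 1))) (j : Fin (n + 1)),
      μ (B (σ j)) = μ (B j) := by
    intro σ j
    have hset : (fun ω (i : Fin (n + 1)) => V ω (σ i)) ⁻¹' TB j = V ⁻¹' TB (σ j) := by
      ext ω
      simp only [hTBdef, Set.mem_preimage, Set.mem_setOf_eq]
      rw [card_filter_perm σ (fun i => (V ω i).2 = true)]
    calc μ (B (σ j)) = μ ((fun ω (i : Fin (n + 1)) => V ω (σ i)) ⁻¹' TB j) := by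
          rw [hBpre]; rw [hset]
      _ = (μ.map (fun ω (i : Fin (n + 1)) => V ω (σ i))) (TB j) := by
          rw [Measure.map_apply (hWmeas σ) (hTBmeas j)]
      _ = (μ.map V) (TB j) := by rw [hexch σ]
      _ = μ (B j) := by rw [Measure.map_apply hVmeas (hTBmeas j), hBpre j]
  have hEeq : ∀ j, μ (E j) = μ (E (Fin.last n)) := fun j => by
    simpa using hperm (Equiv.swap (Fin.last n) j) (Fin.last n)
  have hBeq : ∀ j, μ (B j) = μ (B (Fin.last n)) := fun j => by
    simpa using hpermB (Equiv.swap (Fin.last n) j) (Fin.last n)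
  -- a.e. distinctness
  have hD : ∀ᵐ ω ∂μ, ∀ i j : Fin (n + 1), i ≠ j → U i ω ≠ U j ω := by
    rw [ae_iff]
    have hnull : μ (⋃ (i) (j) (_ : i ≠ j), {ω | U i ω = U j ω}) = 0 :=
      measure_iUnion_null (fun i => measure_iUnion_null (fun j =>
        measure_iUnion_null (fun hij => hdistinct i j hij)))
    refine measure_mono_null ?_ hnull
    intro ω hω
    simp only [Set.mem_setOf_eq, not_forall] at hω
    obtain ⟨i, j, hij, h⟩ := hω
    simp only [Set.mem_iUnion]
    exact ⟨i, j, hij, not_not.1 h⟩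
  -- counting identities
  have key1 : ∑ j, μ (E j) = k * μ C := by
    have h1 : ∀ j : Fin (n + 1), μ (E j)
        = ∫⁻ ω, (E j).indicator (fun _ => (1 : ENNReal)) ω ∂μ := by
      intro j; rw [lintegral_indicator_const (hEmeas j), one_mul]
    rw [Finset.sum_congr rfl (fun j _ => h1 j),
      ← lintegral_finset_sum _ (fun j _ => measurable_const.indicator (hEmeas j))]
    have h2 : ∀ᵐ ω ∂μ, ∑ j, (E j).indicator (fun _ => (1 : ENNReal)) ω
        = (k : ENNReal) * C.indicator (fun _ => (1 : ENNReal)) ω := by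
      filter_upwards [hD] with ω hω
      by_cases hC : ω ∈ C
      · rw [Set.indicator_of_mem hC, mul_one]
        have hEmem : ∀ j, ω ∈ E j ↔ (J j ω = true ∧
            (Finset.univ.filter (fun i => J i ω = true ∧ U i ω ≤ U j ω)).card ≤ k) := by
          intro j
          simp only [hEdef, hTdef, hVdef, Set.mem_preimage, Set.mem_setOf_eq]
          exact ⟨fun h => ⟨h.1, h.2.2⟩, fun h => ⟨h.1, hC, h.2⟩⟩
        have step1 : ∑ j, (E j).indicator (fun _ => (1 : ENNReal)) ω
            = ((Finset.univ.filter (fun j => J j ω = true ∧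
                (Finset.univ.filter (fun i => J i ω = true ∧ U i ω ≤ U j ω)).card ≤ k)).card
                  : ENNReal) := by
          rw [Finset.card_filter, Nat.cast_sum]
          apply Finset.sum_congr rfl
          intro j _
          simp [Set.indicator_apply, hEmem j]
        rw [step1]
        set s : Finset (Fin (n + 1)) := Finset.univ.filter (fun i => J i ω = true) with hs
        have hsc : s.card = c + 1 := hC
        have hinj : Set.InjOn (fun i => U i ω) ↑s := by
          intro i hi j hj hfij
          by_contra hne
          exact hω i j hne hfij
        have inner : ∀ j, Finset.univ.filter (fun i => J i ω = true ∧ U i ω ≤ U j ω)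
            = s.filter (fun i => U i ω ≤ U j ω) := fun j => (Finset.filter_filter _ _ _).symm
        have outer : Finset.univ.filter (fun j => J j ω = true ∧
              (s.filter (fun i => U i ω ≤ U j ω)).card ≤ k)
            = s.filter (fun j => (s.filter (fun i => U i ω ≤ U j ω)).card ≤ k) :=
          (Finset.filter_filter _ _ _).symm
        have := rank_count s (fun i => U i ω) hinj k hk1 (by rw [hsc]; exact hk)
        rw [Finset.filter_congr (fun j _ => by rw [inner j]), outer, this]
      · rw [Set.indicator_of_notMem hC, mul_zero]
        apply Finset.sum_eq_zero
        intro j _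
        apply Set.indicator_of_notMem
        intro hE
        exact hC hE.2.1
    rw [lintegral_congr_ae h2,
      lintegral_const_mul _ (measurable_const.indicator hCmeas),
      lintegral_indicator_const hCmeas, one_mul]
  have key2 : ∑ j, μ (B j) = (c + 1) * μ C := by
    have h1 : ∀ j : Fin (n + 1), μ (B j)
        = ∫⁻ ω, (B j).indicator (fun _ => (1 : ENNReal)) ω ∂μ := by
      intro j; rw [lintegral_indicator_const (hBmeas j), one_mul]
    rw [Finset.sum_congr rfl (fun j _ => h1 j),
      ← lintegral_finset_sum _ (fun j _ => measurable_const.indicator (hBmeas j))]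
    have h2 : ∀ ω, ∑ j, (B j).indicator (fun _ => (1 : ENNReal)) ω
        = ((c : ENNReal) + 1) * C.indicator (fun _ => (1 : ENNReal)) ω := by
      intro ω
      by_cases hC : ω ∈ C
      · rw [Set.indicator_of_mem hC, mul_one]
        have hBmem : ∀ j, ω ∈ B j ↔ J j ω = true := by
          intro j
          simp only [hBdef, Set.mem_setOf_eq]
          exact ⟨fun h => h.1, fun h => ⟨h, hC⟩⟩
        have step1 : ∑ j, (B j).indicator (fun _ => (1 : ENNReal)) ω
            = ((Finset.univ.filter (fun j => J j ω = true)).card : ENNReal) := by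
          rw [Finset.card_filter, Nat.cast_sum]
          apply Finset.sum_congr rfl
          intro j _
          simp [Set.indicator_apply, hBmem j]
        rw [step1]
        have : (Finset.univ.filter (fun j : Fin (n + 1) => J j ω = true)).card = c + 1 := hC
        rw [this]
        push_cast
        rfl
      · rw [Set.indicator_of_notMem hC, mul_zero]
        apply Finset.sum_eq_zero
        intro j _
        apply Set.indicator_of_notMem
        intro hB
        exact hC hB.2
    rw [lintegral_congr h2,
      lintegral_const_mul _ (measurable_const.indicator hCmeas),
      lintegral_indicator_const hCmeas, one_mul]
  -- deduce the ratio
  have hsum1 : ((n:ENNReal) + 1) * μ (E (Fin.last n)) = k * μ C := by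
    rw [← key1, Finset.sum_congr rfl (fun j _ => hEeq j)]
    simp [mul_comm]
  have hsum2 : ((n:ENNReal) + 1) * μ (B (Fin.last n)) = (c + 1) * μ C := by
    rw [← key2, Finset.sum_congr rfl (fun j _ => hBeq j)]
    simp [mul_comm]
  have hAB : A = B (Fin.last n) := by rw [hA]
  have hratio : ((c:ENNReal) + 1) * μ (E (Fin.last n)) = k * μ A := by
    have hn0 : ((n : ENNReal) + 1) ≠ 0 := by simp
    have hntop : ((n : ENNReal) + 1) ≠ ⊤ :=
      ENNReal.add_ne_top.2 ⟨ENNReal.natCast_ne_top n, ENNReal.one_ne_top⟩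
    refine (ENNReal.mul_right_inj hn0 hntop).1 ?_
    calc ((n : ENNReal) + 1) * (((c:ENNReal) + 1) * μ (E (Fin.last n)))
        = ((c:ENNReal) + 1) * (((n : ENNReal) + 1) * μ (E (Fin.last n))) := by ring
      _ = ((c:ENNReal) + 1) * ((k : ENNReal) * μ C) := by rw [hsum1]
      _ = (k : ENNReal) * (((c:ENNReal) + 1) * μ C) := by ring
      _ = (k : ENNReal) * (((n : ENNReal) + 1) * μ (B (Fin.last n))) := by rw [hsum2]
      _ = ((n : ENNReal) + 1) * ((k : ENNReal) * μ A) := by rw [← hAB]; ring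
  -- conditional probability
  have hAmeas : MeasurableSet A := hAB ▸ hBmeas (Fin.last n)
  have hcond : μ[{ω | (Finset.univ.filter (fun i : Fin (n + 1) =>
        J i ω = true ∧ U i ω ≤ U (Fin.last n) ω)).card ≤ k} | A]
      = (μ A)⁻¹ * μ (E (Fin.last n)) := by
    rw [cond_apply hAmeas]
    congr 1
    congr 1
    rw [hA]
    ext ω
    simp only [hEdef, hTdef, hVdef, Set.mem_inter_iff, Set.mem_setOf_eq, Set.mem_preimage]
    tauto
  rw [hcond]
  have hA0 : μ A ≠ 0 := hApos.ne'
  have hAtop : μ A ≠ ⊤ := measure_ne_top μ A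
  have hnum : ((c : ENNReal) + 1) * ENNReal.ofReal (1 - β) ≤ (k : ENNReal) := by
    have hcast : ((c : ENNReal) + 1) = ENNReal.ofReal ((c : ℝ) + 1) := by
      rw [ENNReal.ofReal_add (by positivity) zero_le_one, ENNReal.ofReal_one,
        ENNReal.ofReal_natCast]
    rw [hcast, ← ENNReal.ofReal_mul (by positivity),
      show (k : ENNReal) = ENNReal.ofReal (k : ℝ) by rw [ENNReal.ofReal_natCast]]
    apply ENNReal.ofReal_le_ofReal
    rw [mul_comm]
    exact Nat.le_ceil _
  have hmul : ENNReal.ofReal (1 - β) * μ A ≤ μ (E (Fin.last n)) := by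
    have h4 : ((c : ENNReal) + 1) * (ENNReal.ofReal (1 - β) * μ A)
        ≤ ((c : ENNReal) + 1) * μ (E (Fin.last n)) := by
      rw [hratio, ← mul_assoc]
      exact mul_le_mul_left hnum _
    have hc0 : ((c : ENNReal) + 1) ≠ 0 := by simp
    have hctop : ((c : ENNReal) + 1) ≠ ⊤ :=
      ENNReal.add_ne_top.2 ⟨ENNReal.natCast_ne_top c, ENNReal.one_ne_top⟩
    exact (ENNReal.mul_le_mul_iff_right hc0 hctop).1 h4
  rw [← ENNReal.div_eq_inv_mul]
  exact (ENNReal.le_div_iff_mul_le (Or.inl hA0) (Or.inl hAtop)).2 hmul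
end
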